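/- arXiv:2408.13690 — 2 statements merged into one kernel-verified Lean document; each statement's English description precedes it below -/
import Mathlib

section
/- Under the matched-model hypotheses of Eq. (13) — n, p natural numbers, σ > 0, φ ∈ ℝ^{p+1}, μ ∈ ℝ^{p+1}, Σ ∈ ℝ^{(p+1)×(p+1)} symmetric positive definite, Φ ∈ ℝ^{n×(p+1)}, Σ_p := (Σ⁻¹ + σ⁻² ΦᵀΦ)⁻¹, random vectors w, ε with E[w] = μ, E[w wᵀ] = μμᵀ + Σ, E[ε] = 0, E[ε εᵀ] = σ² I_n, E[w εᵀ] = 0, and μ̂_p := Σ_p Σ⁻¹ μ + σ⁻² Σ_p Φᵀ (Φw + ε) — the Bias term equals the Variance term: E[(⟨φ, w⟩ − ⟨φ, μ̂_p⟩)²] = φᵀ Σ_p φ. -/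
open Matrix MeasureTheory

lemma aux_mul_integrable {Ω : Type*} [MeasurableSpace Ω] {m : Measure Ω}
    {f g : Ω → ℝ} (hf : MemLp f 2 m) (hg : MemLp g 2 m) :
    Integrable (fun ω => f ω * g ω) m := by
  haveI : ENNReal.HolderTriple 2 2 1 := ⟨by simpa using ENNReal.inv_two_add_inv_two⟩
  have h : MemLp (g • f) 1 m := hf.smul hg
  rw [← memLp_one_iff_integrable]
  exact (by simpa [Pi.smul_apply, smul_eq_mul, mul_comm] using h : MemLp (f * g) 1 m)

lemma aux_moment {Ω : Type*} [MeasurableSpace Ω] (m : Measure Ω) [IsProbabilityMeasure m]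
    {k l : ℕ} (σ : ℝ) (μv : Fin k → ℝ) (S : Matrix (Fin k) (Fin k) ℝ)
    (w : Ω → Fin k → ℝ) (e : Ω → Fin l → ℝ)
    (hwL2 : ∀ i, MemLp (fun ω => w ω i) 2 m)
    (heL2 : ∀ i, MemLp (fun ω => e ω i) 2 m)
    (hw1 : ∀ i, ∫ ω, w ω i ∂m = μv i)
    (hw2 : ∀ i j, ∫ ω, w ω i * w ω j ∂m = μv i * μv j + S i j)
    (he1 : ∀ i, ∫ ω, e ω i ∂m = 0)
    (he2 : ∀ i j, ∫ ω, e ω i * e ω j ∂m = σ ^ 2 * (1 : Matrix (Fin l) (Fin l) ℝ) i j)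
    (hwe : ∀ i j, ∫ ω, w ω i * e ω j ∂m = 0)
    (a : Fin k → ℝ) (b : Fin l → ℝ) (c : ℝ) :
    ∫ ω, (a ⬝ᵥ w ω + b ⬝ᵥ e ω + c) ^ 2 ∂m
      = a ⬝ᵥ (S *ᵥ a) + (a ⬝ᵥ μv + c) ^ 2 + σ ^ 2 * (b ⬝ᵥ b) := by
  have hwInt : ∀ i, Integrable (fun ω => w ω i) m := fun i =>
    (hwL2 i).integrable (by norm_num)
  have heInt : ∀ i, Integrable (fun ω => e ω i) m := fun i =>
    (heL2 i).integrable (by norm_num)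
  have hpt : ∀ ω, (a ⬝ᵥ w ω + b ⬝ᵥ e ω + c) ^ 2 =
      (∑ i, ∑ j, (a i * a j) * (w ω i * w ω j))
      + (2 * ∑ i, ∑ j, (a i * b j) * (w ω i * e ω j))
      + (∑ i, ∑ j, (b i * b j) * (e ω i * e ω j))
      + ((2 * c) * ∑ i, a i * w ω i)
      + ((2 * c) * ∑ j, b j * e ω j)
      + c ^ 2 := by
    intro ω
    have h1 : (∑ i, a i * w ω i) * (∑ j, a j * w ω j)
        = ∑ i, ∑ j, (a i * a j) * (w ω i * w ω j) := by
      rw [Finset.sum_mul_sum]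
      exact Finset.sum_congr rfl fun i _ => Finset.sum_congr rfl fun j _ => by ring
    have h2 : (∑ i, a i * w ω i) * (∑ j, b j * e ω j)
        = ∑ i, ∑ j, (a i * b j) * (w ω i * e ω j) := by
      rw [Finset.sum_mul_sum]
      exact Finset.sum_congr rfl fun i _ => Finset.sum_congr rfl fun j _ => by ring
    have h3 : (∑ i, b i * e ω i) * (∑ j, b j * e ω j)
        = ∑ i, ∑ j, (b i * b j) * (e ω i * e ω j) := by
      rw [Finset.sum_mul_sum]
      exact Finset.sum_congr rfl fun i _ => Finset.sum_congr rfl fun j _ => by ring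
    simp only [dotProduct]
    rw [← h1, ← h2, ← h3]
    ring
  have I1 : Integrable (fun ω => ∑ i, ∑ j, (a i * a j) * (w ω i * w ω j)) m :=
    integrable_finset_sum _ fun i _ => integrable_finset_sum _ fun j _ =>
      (aux_mul_integrable (hwL2 i) (hwL2 j)).const_mul _
  have I2 : Integrable (fun ω => 2 * ∑ i, ∑ j, (a i * b j) * (w ω i * e ω j)) m :=
    (integrable_finset_sum _ fun i _ => integrable_finset_sum _ fun j _ =>
      (aux_mul_integrable (hwL2 i) (heL2 j)).const_mul _).const_mul 2
  have I3 : Integrable (fun ω => ∑ i, ∑ j, (b i * b j) * (e ω i * e ω j)) m :=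
    integrable_finset_sum _ fun i _ => integrable_finset_sum _ fun j _ =>
      (aux_mul_integrable (heL2 i) (heL2 j)).const_mul _
  have I4 : Integrable (fun ω => (2 * c) * ∑ i, a i * w ω i) m :=
    (integrable_finset_sum _ fun i _ => (hwInt i).const_mul _).const_mul _
  have I5 : Integrable (fun ω => (2 * c) * ∑ j, b j * e ω j) m :=
    (integrable_finset_sum _ fun j _ => (heInt j).const_mul _).const_mul _
  have I12 : Integrable (fun ω => (∑ i, ∑ j, (a i * a j) * (w ω i * w ω j))
      + (2 * ∑ i, ∑ j, (a i * b j) * (w ω i * e ω j))) m := I1.add I2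
  have I123 : Integrable (fun ω => (∑ i, ∑ j, (a i * a j) * (w ω i * w ω j))
      + (2 * ∑ i, ∑ j, (a i * b j) * (w ω i * e ω j))
      + (∑ i, ∑ j, (b i * b j) * (e ω i * e ω j))) m := I12.add I3
  have I1234 : Integrable (fun ω => (∑ i, ∑ j, (a i * a j) * (w ω i * w ω j))
      + (2 * ∑ i, ∑ j, (a i * b j) * (w ω i * e ω j))
      + (∑ i, ∑ j, (b i * b j) * (e ω i * e ω j))
      + ((2 * c) * ∑ i, a i * w ω i)) m := I123.add I4
  have I12345 : Integrable (fun ω => (∑ i, ∑ j, (a i * a j) * (w ω i * w ω j))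
      + (2 * ∑ i, ∑ j, (a i * b j) * (w ω i * e ω j))
      + (∑ i, ∑ j, (b i * b j) * (e ω i * e ω j))
      + ((2 * c) * ∑ i, a i * w ω i)
      + ((2 * c) * ∑ j, b j * e ω j)) m := I1234.add I5
  have E1 : ∫ ω, (∑ i, ∑ j, (a i * a j) * (w ω i * w ω j)) ∂m
      = ∑ i, ∑ j, (a i * a j) * (μv i * μv j + S i j) := by
    rw [integral_finset_sum _ fun i _ => integrable_finset_sum _ fun j _ =>
        (aux_mul_integrable (hwL2 i) (hwL2 j)).const_mul _]
    refine Finset.sum_congr rfl fun i _ => ?_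
    rw [integral_finset_sum _ fun j _ => (aux_mul_integrable (hwL2 i) (hwL2 j)).const_mul _]
    exact Finset.sum_congr rfl fun j _ => by rw [integral_const_mul _ _, hw2]
  have E2 : ∫ ω, 2 * (∑ i, ∑ j, (a i * b j) * (w ω i * e ω j)) ∂m = 0 := by
    rw [integral_const_mul _ _, integral_finset_sum _ fun i _ => integrable_finset_sum _ fun j _ =>
        (aux_mul_integrable (hwL2 i) (heL2 j)).const_mul _]
    have : ∀ i ∈ Finset.univ, ∫ ω, (∑ j, (a i * b j) * (w ω i * e ω j)) ∂m = 0 := by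
      intro i _
      rw [integral_finset_sum _ fun j _ => (aux_mul_integrable (hwL2 i) (heL2 j)).const_mul _]
      refine Finset.sum_eq_zero fun j _ => ?_
      rw [integral_const_mul _ _, hwe, mul_zero]
    rw [Finset.sum_congr rfl this]
    simp
  have E3 : ∫ ω, (∑ i, ∑ j, (b i * b j) * (e ω i * e ω j)) ∂m = σ ^ 2 * (b ⬝ᵥ b) := by
    rw [integral_finset_sum _ fun i _ => integrable_finset_sum _ fun j _ =>
        (aux_mul_integrable (heL2 i) (heL2 j)).const_mul _]
    have : ∀ i ∈ Finset.univ, ∫ ω, (∑ j, (b i * b j) * (e ω i * e ω j)) ∂m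
        = σ ^ 2 * (b i * b i) := by
      intro i _
      rw [integral_finset_sum _ fun j _ => (aux_mul_integrable (heL2 i) (heL2 j)).const_mul _]
      have : ∀ j ∈ Finset.univ, ∫ ω, (b i * b j) * (e ω i * e ω j) ∂m
          = (b i * b j) * (σ ^ 2 * (1 : Matrix (Fin l) (Fin l) ℝ) i j) := fun j _ => by
        rw [integral_const_mul _ _, he2]
      rw [Finset.sum_congr rfl this]
      simp [Matrix.one_apply, mul_ite, Finset.sum_ite_eq]
      ring
    rw [Finset.sum_congr rfl this, dotProduct, Finset.mul_sum]
  have E4 : ∫ ω, (2 * c) * (∑ i, a i * w ω i) ∂m = (2 * c) * (a ⬝ᵥ μv) := by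
    rw [integral_const_mul _ _, integral_finset_sum _ fun i _ => (hwInt i).const_mul _]
    congr 1
    exact Finset.sum_congr rfl fun i _ => by rw [integral_const_mul _ _, hw1]
  have E5 : ∫ ω, (2 * c) * (∑ j, b j * e ω j) ∂m = 0 := by
    rw [integral_const_mul _ _, integral_finset_sum _ fun j _ => (heInt j).const_mul _]
    have : ∀ j ∈ Finset.univ, ∫ ω, b j * e ω j ∂m = 0 := fun j _ => by
      rw [integral_const_mul _ _, he1, mul_zero]
    rw [Finset.sum_congr rfl this]
    simp
  have key : ∫ ω, (a ⬝ᵥ w ω + b ⬝ᵥ e ω + c) ^ 2 ∂m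
      = ∫ ω, ((∑ i, ∑ j, (a i * a j) * (w ω i * w ω j))
      + (2 * ∑ i, ∑ j, (a i * b j) * (w ω i * e ω j))
      + (∑ i, ∑ j, (b i * b j) * (e ω i * e ω j))
      + ((2 * c) * ∑ i, a i * w ω i)
      + ((2 * c) * ∑ j, b j * e ω j)
      + c ^ 2) ∂m := integral_congr_ae (Filter.Eventually.of_forall hpt)
  rw [key, integral_add I12345 (integrable_const _), integral_add I1234 I5,
    integral_add I123 I4, integral_add I12 I3, integral_add I1 I2,
    E1, E2, E3, E4, E5, integral_const]
  have hA : ∑ i, ∑ j, (a i * a j) * (μv i * μv j + S i j)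
      = (a ⬝ᵥ μv) ^ 2 + a ⬝ᵥ (S *ᵥ a) := by
    have h0 : (a ⬝ᵥ μv) ^ 2 = ∑ i, ∑ j, (a i * a j) * (μv i * μv j) := by
      rw [pow_two, dotProduct, Finset.sum_mul_sum]
      exact Finset.sum_congr rfl fun i _ => Finset.sum_congr rfl fun j _ => by ring
    rw [h0]
    simp only [dotProduct, mulVec, dotProduct, Finset.mul_sum, mul_add,
      Finset.sum_add_distrib]
    congr 1
    exact Finset.sum_congr rfl fun i _ => Finset.sum_congr rfl fun j _ => by ring
  rw [hA]
  simp [measure_univ]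
  ring


/-- The matched-model Bias term (content of Eq. (13) for the Bias alone): under the
matched-model hypotheses of Bayesian polynomial regression, the expected squared
deviation of the posterior-mean prediction from the ground-truth function value
equals the Variance term `φᵀΣ_pφ`. -/
theorem bpr_bias_eq_variance_matched_model {n p : ℕ} (σ : ℝ) (hσ : 0 < σ)
    {Ω : Type*} [MeasurableSpace Ω] (m : Measure Ω) [IsProbabilityMeasure m]
    (φ μv : Fin (p + 1) → ℝ)
    (S : Matrix (Fin (p + 1)) (Fin (p + 1)) ℝ) (hSsymm : S.IsSymm) (hSpd : S.PosDef)
    (Φ : Matrix (Fin n) (Fin (p + 1)) ℝ)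
    (Sp : Matrix (Fin (p + 1)) (Fin (p + 1)) ℝ)
    (hSp : Sp = (S⁻¹ + σ⁻¹ ^ 2 • (Φᵀ * Φ))⁻¹)
    (w : Ω → Fin (p + 1) → ℝ) (e : Ω → Fin n → ℝ)
    (hwL2 : ∀ i, MemLp (fun ω => w ω i) 2 m)
    (heL2 : ∀ i, MemLp (fun ω => e ω i) 2 m)
    (hw1 : ∀ i, ∫ ω, w ω i ∂m = μv i)
    (hw2 : ∀ i j, ∫ ω, w ω i * w ω j ∂m = μv i * μv j + S i j)
    (he1 : ∀ i, ∫ ω, e ω i ∂m = 0)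
    (he2 : ∀ i j, ∫ ω, e ω i * e ω j ∂m = σ ^ 2 * (1 : Matrix (Fin n) (Fin n) ℝ) i j)
    (hwe : ∀ i j, ∫ ω, w ω i * e ω j ∂m = 0)
    (μp : Ω → Fin (p + 1) → ℝ)
    (hμp : ∀ ω, μp ω = Sp *ᵥ (S⁻¹ *ᵥ μv) + σ⁻¹ ^ 2 • (Sp *ᵥ (Φᵀ *ᵥ (Φ *ᵥ w ω + e ω)))) :
    ∫ ω, (φ ⬝ᵥ w ω - φ ⬝ᵥ μp ω) ^ 2 ∂m = φ ⬝ᵥ (Sp *ᵥ φ) := by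
  have hσ' : σ ≠ 0 := hσ.ne'
  set M := S⁻¹ + σ⁻¹ ^ 2 • (Φᵀ * Φ) with hM
  -- positive definiteness of M
  have hPSD : (σ⁻¹ ^ 2 • (Φᵀ * Φ)).PosSemidef := by
    have heq : σ⁻¹ ^ 2 • (Φᵀ * Φ) = (σ⁻¹ • Φ)ᵀ * (σ⁻¹ • Φ) := by
      rw [Matrix.transpose_smul, Matrix.smul_mul, Matrix.mul_smul, smul_smul, pow_two]
    rw [heq]
    have h := Matrix.posSemidef_conjTranspose_mul_self (σ⁻¹ • Φ)
    rwa [Matrix.conjTranspose_eq_transpose_of_trivial] at h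
  have hMpd : M.PosDef := hSpd.inv.add_posSemidef hPSD
  have hMdet : IsUnit M.det := hMpd.det_pos.ne'.isUnit
  have hMS : M * Sp = 1 := by rw [hSp]; exact Matrix.mul_nonsing_inv M hMdet
  -- symmetry facts
  have hSinv : S⁻¹ᵀ = S⁻¹ := by rw [Matrix.transpose_nonsing_inv, hSsymm.eq]
  have hMsymm : Mᵀ = M := by
    rw [hM, Matrix.transpose_add, Matrix.transpose_smul, Matrix.transpose_mul,
      Matrix.transpose_transpose, hSinv]
  have hSpsymm : Spᵀ = Sp := by
    rw [hSp, Matrix.transpose_nonsing_inv, hMsymm]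
  -- the key vector
  set q : Fin (p + 1) → ℝ := Sp *ᵥ φ with hqdef
  have hq : S⁻¹ *ᵥ q + σ⁻¹ ^ 2 • ((Φᵀ * Φ) *ᵥ q) = φ := by
    have : M *ᵥ q = φ := by
      rw [hqdef, Matrix.mulVec_mulVec, hMS, Matrix.one_mulVec]
    rw [← this, hM, Matrix.add_mulVec, Matrix.smul_mulVec]
  set a : Fin (p + 1) → ℝ := S⁻¹ *ᵥ q with hadef
  set b : Fin n → ℝ := -(σ⁻¹ ^ 2 • (Φ *ᵥ q)) with hbdef
  set c : ℝ := -(q ⬝ᵥ (S⁻¹ *ᵥ μv)) with hcdef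
  have hφSp : ∀ x, φ ⬝ᵥ (Sp *ᵥ x) = q ⬝ᵥ x := by
    intro x
    rw [Matrix.dotProduct_mulVec]
    congr 1
    conv_lhs => rw [← hSpsymm]
    rw [Matrix.vecMul_transpose, hqdef]
  have hqΦt : ∀ x, q ⬝ᵥ (Φᵀ *ᵥ x) = (Φ *ᵥ q) ⬝ᵥ x := by
    intro x
    rw [Matrix.dotProduct_mulVec, Matrix.vecMul_transpose]
  have hΦq : ∀ x, (Φ *ᵥ q) ⬝ᵥ (Φ *ᵥ x) = ((Φᵀ * Φ) *ᵥ q) ⬝ᵥ x := by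
    intro x
    rw [Matrix.dotProduct_mulVec, ← Matrix.mulVec_transpose, Matrix.mulVec_mulVec]
  -- pointwise rewriting of the integrand
  have hrw : ∀ ω, φ ⬝ᵥ w ω - φ ⬝ᵥ μp ω = a ⬝ᵥ w ω + b ⬝ᵥ e ω + c := by
    intro ω
    rw [hμp]
    rw [dotProduct_add, dotProduct_smul, hφSp, hφSp, hqΦt,
      dotProduct_add, hΦq]
    have hφw : φ ⬝ᵥ w ω = a ⬝ᵥ w ω + σ⁻¹ ^ 2 * (((Φᵀ * Φ) *ᵥ q) ⬝ᵥ w ω) := by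
      conv_lhs => rw [← hq]
      rw [add_dotProduct, smul_dotProduct, smul_eq_mul]

    rw [hφw, hbdef, hcdef]
    rw [neg_dotProduct, smul_dotProduct, smul_eq_mul]
    simp only [smul_eq_mul]
    ring
  -- apply the moment lemma
  have hint : ∫ ω, (φ ⬝ᵥ w ω - φ ⬝ᵥ μp ω) ^ 2 ∂m
      = ∫ ω, (a ⬝ᵥ w ω + b ⬝ᵥ e ω + c) ^ 2 ∂m :=
    integral_congr_ae (Filter.Eventually.of_forall fun ω => by simp only [hrw ω])
  rw [hint, aux_moment m σ μv S w e hwL2 heL2 hw1 hw2 he1 he2 hwe a b c]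
  -- final algebra
  have hSa : S *ᵥ a = q := by
    rw [hadef, Matrix.mulVec_mulVec, Matrix.mul_nonsing_inv S hSpd.det_pos.ne'.isUnit,
      Matrix.one_mulVec]
  have hzero : a ⬝ᵥ μv + c = 0 := by
    rw [hadef, hcdef]
    have : (S⁻¹ *ᵥ q) ⬝ᵥ μv = q ⬝ᵥ (S⁻¹ *ᵥ μv) := by
      rw [dotProduct_comm, Matrix.dotProduct_mulVec, ← Matrix.mulVec_transpose, hSinv,
        dotProduct_comm]
    rw [this]; ring
  have hbb : b ⬝ᵥ b = (σ⁻¹ ^ 2) * (σ⁻¹ ^ 2) * (((Φᵀ * Φ) *ᵥ q) ⬝ᵥ q) := by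
    rw [hbdef, neg_dotProduct, dotProduct_neg, neg_neg,
      smul_dotProduct, dotProduct_smul, smul_eq_mul, smul_eq_mul, hΦq q]
    ring
  have hfin : φ ⬝ᵥ q = a ⬝ᵥ q + σ⁻¹ ^ 2 * (((Φᵀ * Φ) *ᵥ q) ⬝ᵥ q) := by
    conv_lhs => rw [← hq]
    rw [add_dotProduct, smul_dotProduct, smul_eq_mul]
  rw [hzero, hbb, hfin]
  have haq : a ⬝ᵥ (S *ᵥ a) = a ⬝ᵥ q := by rw [hSa]
  rw [haq]
  have h1 : σ ^ 2 * σ⁻¹ ^ 2 = 1 := by field_simp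
  linear_combination σ⁻¹ ^ 2 * (((Φᵀ * Φ) *ᵥ q) ⬝ᵥ q) * h1
end

section
/- Let n, p, l be natural numbers with p < l, σ > 0. Let φ̃_c ∈ ℝ^{l−p}, φ^p ∈ ℝ^{p+1}, μ̃_c ∈ ℝ^{l−p}, μ̂ ∈ ℝ^{p+1}, Σ̃_c ∈ ℝ^{(l−p)×(l−p)}, Σ₁₂ ∈ ℝ^{(l−p)×(p+1)}, Σ̂ ∈ ℝ^{(p+1)×(p+1)} symmetric positive definite, Φ̃_c ∈ ℝ^{n×(l−p)}, Φ̂ ∈ ℝ^{n×(p+1)}. Form the block objects φ^l := (φ̃_c; φ^p) ∈ ℝ^{l+1}, μ := (μ̃_c; μ̂) ∈ ℝ^{l+1}, Σ := [[Σ̃_c, Σ₁₂],[Σ₁₂ᵀ, Σ̂]] ∈ ℝ^{(l+1)×(l+1)}, Φ := [Φ̃_c, Φ̂] ∈ ℝ^{n×(l+1)}, and set Σ_p := (Σ̂⁻¹ + σ⁻² Φ̂ᵀΦ̂)⁻¹. Let w, ε be square-integrable random vectors with E[w] = μ, E[w wᵀ] = μμᵀ + Σ, E[ε] = 0, E[ε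 εᵀ] = σ² I_n, E[w εᵀ] = 0, and μ̂_p := Σ_p Σ̂⁻¹ μ̂ + σ⁻² Σ_p Φ̂ᵀ (Φw + ε). Then E[(⟨φ^l, w⟩ − ⟨φ^p, μ̂_p⟩)²] + (φ^p)ᵀ Σ_p (φ^p) = φ̃_cᵀ(Σ̃_c + μ̃_c μ̃_cᵀ)φ̃_c − (2/σ²)(φ^p)ᵀ Σ_p Φ̂ᵀ Φ̃_c (Σ̃_c + μ̃_c μ̃_cᵀ) φ̃_c + 2(φ^p)ᵀ Σ_p Σ̂⁻¹ Σ₁₂ᵀ φ̃_c + (1/σ⁴)(φ^p)ᵀ Σ_p Φ̂ᵀ Φ̃_c (Σ̃_c + μ̃_c μ̃_cᵀ) Φ̃_cᵀ Φ̂ Σ_p (φ^p) − (2/σ²)(φ^p)ᵀ Σ_p Φ̂ᵀ Φ̃_c Σ₁₂ Σ̂⁻¹ Σ_p (φ^p) + 2(φ^p)ᵀ Σ_p (φ^p). -/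
open Matrix MeasureTheory

lemma int_mul_L2 {Ω : Type*} [MeasurableSpace Ω] {m : Measure Ω} [IsProbabilityMeasure m]
    {f g : Ω → ℝ} (hf : MemLp f 2 m) (hg : MemLp g 2 m) :
    Integrable (fun ω => f ω * g ω) m := by
  have h : MemLp (f • g) 1 m := hg.smul hf
  have := h.integrable le_rfl
  exact (by simpa [Pi.smul_apply', smul_eq_mul] using this : Integrable (f * g) m)

lemma dswap {k k' : Type*} [Fintype k] [Fintype k']
    (x : k → ℝ) (A : Matrix k k' ℝ) (y : k' → ℝ) :
    x ⬝ᵥ (A *ᵥ y) = (Aᵀ *ᵥ x) ⬝ᵥ y := by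
  rw [mulVec_transpose, dotProduct_mulVec]

lemma dvvm {k k' : Type*} [Fintype k] [Fintype k']
    (x u : k → ℝ) (v y : k' → ℝ) :
    x ⬝ᵥ ((vecMulVec u v) *ᵥ y) = (x ⬝ᵥ u) * (v ⬝ᵥ y) := by
  simp only [dotProduct, mulVec, vecMulVec_apply, Finset.mul_sum, Finset.sum_mul,
    dotProduct]
  rw [Finset.sum_comm]
  congr 1; ext i; congr 1; ext j; ring

lemma integral_affine_sq {Ω : Type*} [MeasurableSpace Ω] (m : Measure Ω)
    [IsProbabilityMeasure m] {ι : Type*} [Fintype ι]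
    (c : ℝ) (d : ι → ℝ) (u : Ω → ι → ℝ)
    (hL2 : ∀ i, MemLp (fun ω => u ω i) 2 m)
    (mv : ι → ℝ) (K : Matrix ι ι ℝ)
    (h1 : ∀ i, ∫ ω, u ω i ∂m = mv i)
    (h2 : ∀ i j, ∫ ω, u ω i * u ω j ∂m = K i j) :
    ∫ ω, (c + d ⬝ᵥ u ω) ^ 2 ∂m = c ^ 2 + 2 * c * (d ⬝ᵥ mv) + d ⬝ᵥ (K *ᵥ d) := by
  have hInt1 : ∀ i, Integrable (fun ω => u ω i) m := fun i => (hL2 i).integrable one_le_two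
  have hrw : (fun ω => (c + d ⬝ᵥ u ω) ^ 2) = fun ω =>
      c ^ 2 + (∑ i, (2 * c * d i) * u ω i
        + ∑ i, ∑ j, (d i * d j) * (u ω i * u ω j)) := by
    funext ω
    have h1' : (d ⬝ᵥ u ω) * (d ⬝ᵥ u ω)
        = ∑ i, ∑ j, (d i * d j) * (u ω i * u ω j) := by
      simp only [dotProduct, Finset.sum_mul_sum]
      congr 1; ext i; congr 1; ext j; ring
    have h2' : 2 * c * (d ⬝ᵥ u ω) = ∑ i, (2 * c * d i) * u ω i := by
      simp only [dotProduct, Finset.mul_sum]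
      congr 1; ext i; ring
    rw [add_sq, ← h2', ← h1']
    ring
  have I2 : Integrable (fun ω => ∑ i, (2 * c * d i) * u ω i) m :=
    integrable_finset_sum _ fun i _ => (hInt1 i).const_mul _
  have I3 : Integrable (fun ω => ∑ i, ∑ j, (d i * d j) * (u ω i * u ω j)) m :=
    integrable_finset_sum _ fun i _ => integrable_finset_sum _ fun j _ =>
      (int_mul_L2 (hL2 i) (hL2 j)).const_mul _
  have I23 : Integrable (fun ω => ∑ i, (2 * c * d i) * u ω i
      + ∑ i, ∑ j, (d i * d j) * (u ω i * u ω j)) m := I2.add I3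
  rw [hrw, integral_add (integrable_const _) I23, integral_add I2 I3,
    integral_const, integral_finset_sum _ fun i _ => (hInt1 i).const_mul _,
    integral_finset_sum _ fun i _ => (integrable_finset_sum _ fun j _ =>
      (int_mul_L2 (hL2 i) (hL2 j)).const_mul _)]
  simp only [integral_const_mul, h1, probReal_univ, measure_univ, ENNReal.toReal_one, smul_eq_mul, one_mul]
  have : ∀ i, ∫ ω, ∑ j, (d i * d j) * (u ω i * u ω j) ∂m
      = ∑ j, (d i * d j) * K i j := by
    intro i
    rw [integral_finset_sum _ fun j _ => (int_mul_L2 (hL2 i) (hL2 j)).const_mul _]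
    simp only [integral_const_mul, h2]
  simp only [this]
  have e1 : ∑ i, 2 * c * d i * mv i = 2 * c * (d ⬝ᵥ mv) := by
    rw [dotProduct, Finset.mul_sum]
    exact Finset.sum_congr rfl fun i _ => by ring
  have e2 : ∑ i, ∑ j, d i * d j * K i j = d ⬝ᵥ (K *ᵥ d) := by
    simp only [dotProduct, mulVec, Finset.mul_sum]
    exact Finset.sum_congr rfl fun i _ => Finset.sum_congr rfl fun j _ => by ring
  rw [e1, e2, add_assoc]


/-- Eq. (14) of the paper, the lower-order (model-mismatch) case `p < l` of the
Bayesian polynomial regression MSE. The ground-truth feature vector, coefficient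
mean, covariance and design matrix are split into blocks: the higher-order
components (subscript `c`) indexed by `Fin (l - p)` and the lower-order components
indexed by `Fin (p + 1)`. The MSE (Bias + Variance) equals `P(x) + 2·Var(x)` with
`Var(x) = (φ^p)ᵀ Σ_p (φ^p)`. -/
theorem bpr_mse_lower_order_model {n p l : ℕ} (hpl : p < l) (σ : ℝ) (hσ : 0 < σ)
    {Ω : Type*} [MeasurableSpace Ω] (m : Measure Ω) [IsProbabilityMeasure m]
    (φc μc : Fin (l - p) → ℝ) (φp μh : Fin (p + 1) → ℝ)
    (Sc : Matrix (Fin (l - p)) (Fin (l - p)) ℝ)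
    (S12 : Matrix (Fin (l - p)) (Fin (p + 1)) ℝ)
    (Sh : Matrix (Fin (p + 1)) (Fin (p + 1)) ℝ)
    (hShsymm : Sh.IsSymm) (hShpd : Sh.PosDef)
    (Φc : Matrix (Fin n) (Fin (l - p)) ℝ) (Φh : Matrix (Fin n) (Fin (p + 1)) ℝ)
    -- block objects: `φˡ = (φ̃_c; φᵖ)`, `μ = (μ̃_c; μ̂)`,
    -- `Σ = [[Σ̃_c, Σ₁₂], [Σ₁₂ᵀ, Σ̂]]`, `Φ = [Φ̃_c, Φ̂]`
    (φl : Fin (l - p) ⊕ Fin (p + 1) → ℝ) (hφl : φl = Sum.elim φc φp)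
    (μv : Fin (l - p) ⊕ Fin (p + 1) → ℝ) (hμv : μv = Sum.elim μc μh)
    (S : Matrix (Fin (l - p) ⊕ Fin (p + 1)) (Fin (l - p) ⊕ Fin (p + 1)) ℝ)
    (hS : S = Matrix.fromBlocks Sc S12 S12ᵀ Sh)
    (Φ : Matrix (Fin n) (Fin (l - p) ⊕ Fin (p + 1)) ℝ)
    (hΦ : Φ = Matrix.fromCols Φc Φh)
    (Sp : Matrix (Fin (p + 1)) (Fin (p + 1)) ℝ)
    (hSp : Sp = (Sh⁻¹ + σ⁻¹ ^ 2 • (Φhᵀ * Φh))⁻¹)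
    (w : Ω → Fin (l - p) ⊕ Fin (p + 1) → ℝ) (e : Ω → Fin n → ℝ)
    (hwL2 : ∀ i, MemLp (fun ω => w ω i) 2 m)
    (heL2 : ∀ i, MemLp (fun ω => e ω i) 2 m)
    (hw1 : ∀ i, ∫ ω, w ω i ∂m = μv i)
    (hw2 : ∀ i j, ∫ ω, w ω i * w ω j ∂m = μv i * μv j + S i j)
    (he1 : ∀ i, ∫ ω, e ω i ∂m = 0)
    (he2 : ∀ i j, ∫ ω, e ω i * e ω j ∂m = σ ^ 2 * (1 : Matrix (Fin n) (Fin n) ℝ) i j)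
    (hwe : ∀ i j, ∫ ω, w ω i * e ω j ∂m = 0)
    (μp : Ω → Fin (p + 1) → ℝ)
    (hμp : ∀ ω, μp ω = Sp *ᵥ (Sh⁻¹ *ᵥ μh) + σ⁻¹ ^ 2 • (Sp *ᵥ (Φhᵀ *ᵥ (Φ *ᵥ w ω + e ω)))) :
    (∫ ω, (φl ⬝ᵥ w ω - φp ⬝ᵥ μp ω) ^ 2 ∂m) + φp ⬝ᵥ (Sp *ᵥ φp) =
      φc ⬝ᵥ ((Sc + vecMulVec μc μc) *ᵥ φc)
        - (2 / σ ^ 2) * (φp ⬝ᵥ ((Sp * Φhᵀ * Φc * (Sc + vecMulVec μc μc)) *ᵥ φc))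
        + 2 * (φp ⬝ᵥ ((Sp * Sh⁻¹ * S12ᵀ) *ᵥ φc))
        + (1 / σ ^ 4) *
            (φp ⬝ᵥ ((Sp * Φhᵀ * Φc * (Sc + vecMulVec μc μc) * Φcᵀ * Φh * Sp) *ᵥ φp))
        - (2 / σ ^ 2) * (φp ⬝ᵥ ((Sp * Φhᵀ * Φc * S12 * Sh⁻¹ * Sp) *ᵥ φp))
        + 2 * (φp ⬝ᵥ (Sp *ᵥ φp)) := by
  have hσ0 : σ ≠ 0 := ne_of_gt hσ
  -- matrix facts
  have hGpsd : (σ⁻¹ ^ 2 • (Φhᵀ * Φh)).PosSemidef := by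
    have h := Matrix.posSemidef_conjTranspose_mul_self (σ⁻¹ • Φh)
    have heq : (σ⁻¹ • Φh)ᴴ * (σ⁻¹ • Φh) = σ⁻¹ ^ 2 • (Φhᵀ * Φh) := by
      rw [conjTranspose_smul]
      simp only [star_trivial]
      rw [Matrix.smul_mul, Matrix.mul_smul, smul_smul, ← sq,
        conjTranspose_eq_transpose_of_trivial]
    rwa [heq] at h
  have hBpd : (Sh⁻¹ + σ⁻¹ ^ 2 • (Φhᵀ * Φh)).PosDef := hShpd.inv.add_posSemidef hGpsd
  have hBdet : IsUnit (Sh⁻¹ + σ⁻¹ ^ 2 • (Φhᵀ * Φh)).det := hBpd.det_pos.ne'.isUnit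
  have hBSp : (Sh⁻¹ + σ⁻¹ ^ 2 • (Φhᵀ * Φh)) * Sp = 1 := by
    rw [hSp]; exact mul_nonsing_inv _ hBdet
  have hShdet : IsUnit Sh.det := hShpd.det_pos.ne'.isUnit
  have hShiT : (Sh⁻¹)ᵀ = Sh⁻¹ := by rw [transpose_nonsing_inv, hShsymm.eq]
  have hSpT : Spᵀ = Sp := by
    rw [hSp, transpose_nonsing_inv]
    congr 1
    rw [transpose_add, hShiT, transpose_smul, transpose_mul, transpose_transpose]
  have hkey : (σ⁻¹ ^ 2 • (Φhᵀ * Φh)) * Sp = 1 - Sh⁻¹ * Sp := by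
    have h := hBSp
    rw [add_mul] at h
    exact eq_sub_of_add_eq' h
  -- symmetry of Sc
  have hSsym : ∀ i j, S i j = S j i := by
    intro i j
    have h3 : ∫ ω, w ω i * w ω j ∂m = ∫ ω, w ω j * w ω i ∂m := by
      simp_rw [mul_comm]
    rw [hw2 i j, hw2 j i] at h3
    have hc : μv i * μv j = μv j * μv i := mul_comm _ _
    linarith
  have hScT : Scᵀ = Sc := by
    ext i j
    have h := hSsym (Sum.inl j) (Sum.inl i)
    simpa [hS] using h
  -- abbreviations
  set r : Fin n → ℝ := Φh *ᵥ (Sp *ᵥ φp) with hr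
  set q : Fin (l - p) → ℝ := σ⁻¹ ^ 2 • (Φcᵀ *ᵥ r) with hq
  set ac : Fin (l - p) → ℝ := φc - q with hac
  set ap : Fin (p + 1) → ℝ := φp - σ⁻¹ ^ 2 • (Φhᵀ *ᵥ r) with hap
  set c0 : ℝ := -(φp ⬝ᵥ (Sp *ᵥ (Sh⁻¹ *ᵥ μh))) with hc0
  set av : Fin (l - p) ⊕ Fin (p + 1) → ℝ := φl - σ⁻¹ ^ 2 • (Φᵀ *ᵥ r) with hav
  set bv : Fin n → ℝ := (-(σ⁻¹ ^ 2)) • r with hbv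
  have hrz : ∀ z : Fin n → ℝ, φp ⬝ᵥ (Sp *ᵥ (Φhᵀ *ᵥ z)) = r ⬝ᵥ z := by
    intro z
    rw [dswap φp Sp _, hSpT, dswap _ Φhᵀ z, transpose_transpose, hr]
  have hpt : ∀ ω, φl ⬝ᵥ w ω - φp ⬝ᵥ μp ω
      = c0 + (Sum.elim av bv) ⬝ᵥ (Sum.elim (w ω) (e ω)) := by
    intro ω
    have h1 : φp ⬝ᵥ μp ω = φp ⬝ᵥ (Sp *ᵥ (Sh⁻¹ *ᵥ μh))
        + σ⁻¹ ^ 2 * (r ⬝ᵥ (Φ *ᵥ w ω) + r ⬝ᵥ e ω) := by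
      rw [hμp ω, dotProduct_add, dotProduct_smul, hrz, dotProduct_add, smul_eq_mul]
    have h2 : Sum.elim av bv ⬝ᵥ Sum.elim (w ω) (e ω)
        = φl ⬝ᵥ w ω - σ⁻¹ ^ 2 * (r ⬝ᵥ (Φ *ᵥ w ω)) - σ⁻¹ ^ 2 * (r ⬝ᵥ e ω) := by
      rw [sumElim_dotProduct_sumElim, hav, hbv, sub_dotProduct, smul_dotProduct,
        smul_dotProduct, ← dswap r Φ (w ω), smul_eq_mul, smul_eq_mul]
      ring
    rw [h1, h2, hc0]
    ring
  have hL2u : ∀ i, MemLp (fun ω => Sum.elim (w ω) (e ω) i) 2 m := by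
    rintro (i | i)
    · simpa using hwL2 i
    · simpa using heL2 i
  have hmean : ∀ i, ∫ ω, Sum.elim (w ω) (e ω) i ∂m = Sum.elim μv 0 i := by
    rintro (i | i) <;> simp [hw1, he1]
  have hcov : ∀ i j, ∫ ω, Sum.elim (w ω) (e ω) i * Sum.elim (w ω) (e ω) j ∂m
      = Matrix.fromBlocks (vecMulVec μv μv + S) 0 0
          (σ ^ 2 • (1 : Matrix (Fin n) (Fin n) ℝ)) i j := by
    rintro (i | i) (j | j)
    · simpa [vecMulVec_apply] using hw2 i j
    · simpa using hwe i j
    · simp only [Sum.elim_inr, Sum.elim_inl, fromBlocks_apply₂₁, Matrix.zero_apply]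
      calc ∫ ω, e ω i * w ω j ∂m = ∫ ω, w ω j * e ω i ∂m := by simp_rw [mul_comm]
        _ = 0 := hwe j i
    · simpa using he2 i j
  have hIq := integral_affine_sq m c0 (Sum.elim av bv) (fun ω => Sum.elim (w ω) (e ω))
      hL2u (Sum.elim μv 0) _ hmean hcov
  have hintrw : ∫ ω, (φl ⬝ᵥ w ω - φp ⬝ᵥ μp ω) ^ 2 ∂m
      = c0 ^ 2 + 2 * c0 * (Sum.elim av bv ⬝ᵥ Sum.elim μv 0)
        + Sum.elim av bv ⬝ᵥ (Matrix.fromBlocks (vecMulVec μv μv + S) 0 0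
            (σ ^ 2 • (1 : Matrix (Fin n) (Fin n) ℝ)) *ᵥ Sum.elim av bv) := by
    rw [← hIq]
    apply integral_congr_ae
    filter_upwards with ω
    rw [hpt ω]
  have hd1 : Sum.elim av bv ⬝ᵥ Sum.elim μv 0 = av ⬝ᵥ μv := by
    rw [sumElim_dotProduct_sumElim, dotProduct_zero, add_zero]
  have hd2 : Sum.elim av bv ⬝ᵥ (Matrix.fromBlocks (vecMulVec μv μv + S) 0 0
        (σ ^ 2 • (1 : Matrix (Fin n) (Fin n) ℝ)) *ᵥ Sum.elim av bv)
      = (av ⬝ᵥ μv) ^ 2 + av ⬝ᵥ (S *ᵥ av) + σ ^ 2 * (bv ⬝ᵥ bv) := by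
    rw [fromBlocks_mulVec, sumElim_dotProduct_sumElim]
    simp only [Sum.elim_comp_inl, Sum.elim_comp_inr, Matrix.zero_mulVec, add_zero,
      zero_add, add_mulVec, dotProduct_add, smul_mulVec, Matrix.one_mulVec,
      dotProduct_smul, smul_eq_mul, dvvm]
    rw [dotProduct_comm μv av]
    ring
  -- the block components of `av`
  have havelim : av = Sum.elim ac ap := by
    funext i
    cases i with
    | inl i =>
        simp [hav, hφl, hΦ, transpose_fromCols, fromRows_mulVec, hac, hq]
    | inr i =>
        simp [hav, hφl, hΦ, transpose_fromCols, fromRows_mulVec, hap]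
  have hapSp : ap = (Sh⁻¹ * Sp) *ᵥ φp := by
    rw [hap, hr, mulVec_mulVec, mulVec_mulVec, ← smul_mulVec,
      ← Matrix.smul_mul, hkey, sub_mulVec, Matrix.one_mulVec, sub_sub_cancel]
  have hqz : ∀ z, q ⬝ᵥ z = σ⁻¹ ^ 2 * (φp ⬝ᵥ ((Sp * (Φhᵀ * Φc)) *ᵥ z)) := by
    intro z
    rw [hq, smul_dotProduct, smul_eq_mul]
    congr 1
    rw [← dswap r Φc z, hr, dotProduct_comm (Φh *ᵥ (Sp *ᵥ φp)) (Φc *ᵥ z),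
      dswap (Φc *ᵥ z) Φh (Sp *ᵥ φp), dswap (Φhᵀ *ᵥ (Φc *ᵥ z)) Sp φp, hSpT,
      dotProduct_comm (Sp *ᵥ (Φhᵀ *ᵥ (Φc *ᵥ z))) φp, mulVec_mulVec, mulVec_mulVec,
      Matrix.mul_assoc]
  have hterm1 : av ⬝ᵥ μv = ac ⬝ᵥ μc - c0 := by
    rw [havelim, hμv, sumElim_dotProduct_sumElim, hapSp]
    have h1 : ((Sh⁻¹ * Sp) *ᵥ φp) ⬝ᵥ μh = φp ⬝ᵥ (Sp *ᵥ (Sh⁻¹ *ᵥ μh)) := by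
      rw [dotProduct_comm, dswap μh (Sh⁻¹ * Sp) φp, transpose_mul, hSpT, hShiT,
        ← mulVec_mulVec, dotProduct_comm]
    rw [h1, hc0]
    ring
  have hcross0 : ((Sh⁻¹ * Sp) *ᵥ φp) ⬝ᵥ (Sp *ᵥ φp)
      = φp ⬝ᵥ ((Sp * (Sh⁻¹ * Sp)) *ᵥ φp) := by
    rw [dswap ((Sh⁻¹ * Sp) *ᵥ φp) Sp φp, hSpT, mulVec_mulVec,
      dotProduct_comm]
  have hShShi : Sh *ᵥ ((Sh⁻¹ * Sp) *ᵥ φp) = Sp *ᵥ φp := by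
    rw [mulVec_mulVec, ← Matrix.mul_assoc, mul_nonsing_inv _ hShdet, Matrix.one_mul]
  have hterm2 : av ⬝ᵥ (S *ᵥ av) = ac ⬝ᵥ (Sc *ᵥ ac) + 2 * (ac ⬝ᵥ (S12 *ᵥ ap))
      + φp ⬝ᵥ ((Sp * (Sh⁻¹ * Sp)) *ᵥ φp) := by
    rw [havelim, hS, fromBlocks_mulVec, sumElim_dotProduct_sumElim]
    simp only [Sum.elim_comp_inl, Sum.elim_comp_inr, dotProduct_add]
    have h1 : ap ⬝ᵥ (S12ᵀ *ᵥ ac) = ac ⬝ᵥ (S12 *ᵥ ap) := by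
      rw [dswap ap S12ᵀ ac, transpose_transpose, dotProduct_comm]
    have h2 : ap ⬝ᵥ (Sh *ᵥ ap) = φp ⬝ᵥ ((Sp * (Sh⁻¹ * Sp)) *ᵥ φp) := by
      rw [hapSp, hShShi, hcross0]
    rw [h1, h2]
    ring
  have hterm3 : σ ^ 2 * (bv ⬝ᵥ bv)
      = φp ⬝ᵥ (Sp *ᵥ φp) - φp ⬝ᵥ ((Sp * (Sh⁻¹ * Sp)) *ᵥ φp) := by
    have h1 : bv ⬝ᵥ bv = σ⁻¹ ^ 2 * (σ⁻¹ ^ 2 * (r ⬝ᵥ r)) := by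
      rw [hbv, smul_dotProduct, dotProduct_smul, smul_eq_mul, smul_eq_mul]
      ring
    have h2 : σ ^ 2 * (σ⁻¹ ^ 2 * (σ⁻¹ ^ 2 * (r ⬝ᵥ r))) = σ⁻¹ ^ 2 * (r ⬝ᵥ r) := by
      field_simp
    have h3 : σ⁻¹ ^ 2 * (r ⬝ᵥ r)
        = φp ⬝ᵥ (Sp *ᵥ φp) - φp ⬝ᵥ ((Sp * (Sh⁻¹ * Sp)) *ᵥ φp) := by
      have hrr : r ⬝ᵥ r = ((Φhᵀ * Φh) *ᵥ (Sp *ᵥ φp)) ⬝ᵥ (Sp *ᵥ φp) := by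
        conv_lhs => rw [hr]
        rw [dswap (Φh *ᵥ (Sp *ᵥ φp)) Φh (Sp *ᵥ φp), mulVec_mulVec]
      rw [hrr, ← smul_eq_mul, ← smul_dotProduct, ← smul_mulVec, mulVec_mulVec,
        hkey, sub_mulVec, Matrix.one_mulVec, sub_dotProduct,
        dotProduct_comm φp (Sp *ᵥ φp)]
      rw [hcross0]
    rw [h1, h2]
    exact h3
  -- quadratic expansion in `ac`
  have hNT : (Sc + vecMulVec μc μc)ᵀ = Sc + vecMulVec μc μc := by
    rw [transpose_add, hScT]
    congr 1
    ext i j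
    simp [vecMulVec_apply, mul_comm]
  have hbias : (ac ⬝ᵥ μc) ^ 2 + ac ⬝ᵥ (Sc *ᵥ ac)
      = ac ⬝ᵥ ((Sc + vecMulVec μc μc) *ᵥ ac) := by
    rw [add_mulVec, dotProduct_add, dvvm, sq, dotProduct_comm μc ac]
    ring
  have hqv : q = σ⁻¹ ^ 2 • ((Φcᵀ * (Φh * Sp)) *ᵥ φp) := by
    rw [hq, hr, mulVec_mulVec, mulVec_mulVec, Matrix.mul_assoc]
  have hquad : ac ⬝ᵥ ((Sc + vecMulVec μc μc) *ᵥ ac)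
      = φc ⬝ᵥ ((Sc + vecMulVec μc μc) *ᵥ φc)
      - 2 * (σ⁻¹ ^ 2 * (φp ⬝ᵥ ((Sp * (Φhᵀ * Φc)) *ᵥ ((Sc + vecMulVec μc μc) *ᵥ φc))))
      + σ⁻¹ ^ 2 * (σ⁻¹ ^ 2 * (φp ⬝ᵥ ((Sp * (Φhᵀ * Φc)) *ᵥ
          ((Sc + vecMulVec μc μc) *ᵥ ((Φcᵀ * (Φh * Sp)) *ᵥ φp))))) := by
    have hsym : φc ⬝ᵥ ((Sc + vecMulVec μc μc) *ᵥ q)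
        = q ⬝ᵥ ((Sc + vecMulVec μc μc) *ᵥ φc) := by
      rw [dswap φc (Sc + vecMulVec μc μc) q, hNT, dotProduct_comm]
    have hq2 : q ⬝ᵥ ((Sc + vecMulVec μc μc) *ᵥ q)
        = σ⁻¹ ^ 2 * (σ⁻¹ ^ 2 * (φp ⬝ᵥ ((Sp * (Φhᵀ * Φc)) *ᵥ
            ((Sc + vecMulVec μc μc) *ᵥ ((Φcᵀ * (Φh * Sp)) *ᵥ φp))))) := by
      conv_lhs => rw [show ((Sc + vecMulVec μc μc) *ᵥ q)
        = σ⁻¹ ^ 2 • ((Sc + vecMulVec μc μc) *ᵥ ((Φcᵀ * (Φh * Sp)) *ᵥ φp)) from by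
          rw [hqv, mulVec_smul]]
      rw [dotProduct_smul, smul_eq_mul, hqz]
    rw [hac, sub_dotProduct, mulVec_sub, dotProduct_sub, dotProduct_sub, hsym,
      hqz ((Sc + vecMulVec μc μc) *ᵥ φc), hq2]
    ring
  have hcrossterm : ac ⬝ᵥ (S12 *ᵥ ap)
      = φp ⬝ᵥ ((Sp * (Sh⁻¹ * S12ᵀ)) *ᵥ φc)
      - σ⁻¹ ^ 2 * (φp ⬝ᵥ ((Sp * (Φhᵀ * Φc)) *ᵥ ((S12 * (Sh⁻¹ * Sp)) *ᵥ φp))) := by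
    rw [hapSp, hac, sub_dotProduct, mulVec_mulVec]
    have h1 : φc ⬝ᵥ ((S12 * (Sh⁻¹ * Sp)) *ᵥ φp)
        = φp ⬝ᵥ ((Sp * (Sh⁻¹ * S12ᵀ)) *ᵥ φc) := by
      rw [dswap φc (S12 * (Sh⁻¹ * Sp)) φp, transpose_mul, transpose_mul, hSpT, hShiT,
        dotProduct_comm, Matrix.mul_assoc]
    have h2 := hqz ((S12 * (Sh⁻¹ * Sp)) *ᵥ φp)
    rw [h1, h2]
  -- final assembly
  have hcoef2 : 2 / σ ^ 2 = 2 * σ⁻¹ ^ 2 := by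
    rw [inv_pow, div_eq_mul_inv]
  have hcoef4 : 1 / σ ^ 4 = σ⁻¹ ^ 2 * σ⁻¹ ^ 2 := by
    rw [inv_pow, ← mul_inv, one_div, ← pow_add]
  rw [hintrw, hd1, hd2, hcoef2, hcoef4, hterm1]
  simp only [mulVec_mulVec, Matrix.mul_assoc] at hquad hcrossterm hterm2 hterm3 ⊢
  linear_combination hterm2 + hterm3 + hbias + hquad + 2 * hcrossterm
end
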